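/- arXiv:1004.5238 — 4 statements merged into one kernel-verified Lean document; each statement's English description precedes it below -/
import Mathlib

section
/- In the root system of type C_n (n ≥ 2), there exists a maximal set of pairwise strongly orthogonal roots θ_1, ..., θ_ℓ for which the center of the centralizer of the corresponding sl_2-subalgebras in sp(n) has dimension strictly less than ℓ. -/
/-!
Take the `n` long roots `2eᵢ`. Two of them are strongly orthogonal because the sum or
difference has two coordinates of absolute value `2`, which no root has; the family is maximal
because every short root `±eᵢ ± eⱼ` becomes a root after adding or subtracting `2eⱼ`.
The real form of `s(2eᵢ)` contains `Eᵢ - Fᵢ` and `i(Eᵢ + Fᵢ)`, where `Eᵢ = e_{i,n+i}` and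
`Fᵢ = e_{n+i,i}` are the root vectors of `±2eᵢ`; so an element of the centralizer commutes
with all matrix units `Eᵢ, Fᵢ`. It is therefore diagonal with equal entries at `i` and `n+i`,
while the symplectic condition makes these entries opposite. The centralizer, and hence the
center of the centralizer, is `0`, of dimension `0 < n`.
-/

open Matrix

attribute [local instance 100] LieRing.ofAssociativeRing

noncomputable section

/-- The roots of the root system `C_n`: `±e_i ± e_j` (`i ≠ j`) and `±2e_i`,
encoded as integer vectors. -/
def CnRoots (n : ℕ) : Set (Fin n → ℤ) :=
  {v | (∃ i j : Fin n, i ≠ j ∧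
          (v = Pi.single i 1 - Pi.single j 1 ∨ v = Pi.single i 1 + Pi.single j 1 ∨
           v = -(Pi.single i 1 + Pi.single j 1))) ∨
       (∃ i : Fin n, v = 2 • Pi.single i 1 ∨ v = -(2 • Pi.single i 1))}

/-- Strong orthogonality of roots: `α ± β` is never a root (and `α ≠ ±β`). -/
def CnStrongOrth (n : ℕ) (α β : Fin n → ℤ) : Prop :=
  α ≠ β ∧ α ≠ -β ∧ (α + β) ∉ CnRoots n ∧ (α - β) ∉ CnRoots n

/-- The standard symplectic structure matrix. -/
def Jmat (n : ℕ) : Matrix (Fin n ⊕ Fin n) (Fin n ⊕ Fin n) ℂ :=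
  fromBlocks 0 1 (-1) 0

/-- The compact symplectic Lie algebra `sp(n) = su(2n) ∩ sp(2n, ℂ)`. -/
def spCompact (n : ℕ) : Set (Matrix (Fin n ⊕ Fin n) (Fin n ⊕ Fin n) ℂ) :=
  {A | Aᴴ = -A ∧ Aᵀ * Jmat n = -(Jmat n * A)}

/-- The Cartan element `H_d = diag(d, -d)` of `sp(2n, ℂ)`. -/
def CnCartan (n : ℕ) (d : Fin n → ℂ) : Matrix (Fin n ⊕ Fin n) (Fin n ⊕ Fin n) ℂ :=
  fromBlocks (diagonal d) 0 0 (-diagonal d)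

/-- The root space `g_α ⊆ sp(2n, ℂ)` of a root `α` of `C_n`. -/
def CnRootSpace (n : ℕ) (α : Fin n → ℤ) :
    Set (Matrix (Fin n ⊕ Fin n) (Fin n ⊕ Fin n) ℂ) :=
  {A | (Aᵀ * Jmat n = -(Jmat n * A)) ∧
       ∀ d : Fin n → ℂ, ⁅CnCartan n d, A⁆ = (∑ i, (α i : ℂ) * d i) • A}

/-- The `sp(1)`-subalgebra `s(θ)` of the compact real form generated by the root
spaces of `±θ`. -/
def CnS (n : ℕ) (θ : Fin n → ℤ) : Set (Matrix (Fin n ⊕ Fin n) (Fin n ⊕ Fin n) ℂ) :=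
  {A | A ∈ spCompact n ∧
       A ∈ (LieSubalgebra.lieSpan ℂ (Matrix (Fin n ⊕ Fin n) (Fin n ⊕ Fin n) ℂ)
              (CnRootSpace n θ ∪ CnRootSpace n (-θ)) : Set _)}

/-- The centralizer in `sp(n)` of the subalgebras `s(θ_1), …, s(θ_ℓ)`. -/
def CnCentralizer (n ℓ : ℕ) (θ : Fin ℓ → Fin n → ℤ) :
    Set (Matrix (Fin n ⊕ Fin n) (Fin n ⊕ Fin n) ℂ) :=
  {A | A ∈ spCompact n ∧ ∀ k : Fin ℓ, ∀ B ∈ CnS n (θ k), A * B = B * A}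

/-- The center of the centralizer. -/
def CnCenterCentralizer (n ℓ : ℕ) (θ : Fin ℓ → Fin n → ℤ) :
    Set (Matrix (Fin n ⊕ Fin n) (Fin n ⊕ Fin n) ℂ) :=
  {A | A ∈ CnCentralizer n ℓ θ ∧ ∀ B ∈ CnCentralizer n ℓ θ, A * B = B * A}

theorem commute_of_commute_sub_of_commute_smul_add {K A : Type*} [Field K] [CharZero K]
    [Ring A] [Algebra K A] {a x y : A} {c : K} (hc : c ≠ 0)
    (hsub : Commute a (x - y)) (hadd : Commute a (c • (x + y))) :
    Commute a x ∧ Commute a y := by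
  have hadd' := (Commute.smul_right_iff₀ hc).1 hadd
  refine ⟨(Commute.smul_right_iff₀ (two_ne_zero (α := K))).1 ?_,
    (Commute.smul_right_iff₀ (two_ne_zero (α := K))).1 ?_⟩
  · simpa [two_smul] using hadd'.add_right hsub
  · simpa [two_smul] using hadd'.sub_right hsub

namespace Cn

variable {n : ℕ}

def longRoot (i : Fin n) : Fin n → ℤ := 2 • Pi.single i 1

def rootVectorE (i : Fin n) : Matrix (Fin n ⊕ Fin n) (Fin n ⊕ Fin n) ℂ :=
  single (Sum.inl i) (Sum.inr i) 1

def rootVectorF (i : Fin n) : Matrix (Fin n ⊕ Fin n) (Fin n ⊕ Fin n) ℂ :=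
  single (Sum.inr i) (Sum.inl i) 1

lemma sum_longRoot_mul (i : Fin n) (d : Fin n → ℂ) :
    ∑ j, ((longRoot i j : ℤ) : ℂ) * d j = 2 * d i := by
  simp [longRoot, Pi.single_apply]

lemma sum_neg_longRoot_mul (i : Fin n) (d : Fin n → ℂ) :
    ∑ j, (((-longRoot i) j : ℤ) : ℂ) * d j = -(2 * d i) := by
  simp [longRoot, Pi.single_apply]

lemma CnCartan_eq_diagonal (d : Fin n → ℂ) :
    CnCartan n d = diagonal (Sum.elim d (-d)) := by
  simp [CnCartan, ← fromBlocks_diagonal]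

lemma rootVectorE_mem_rootSpace (i : Fin n) : rootVectorE i ∈ CnRootSpace n (longRoot i) := by
  refine ⟨?_, fun d => ?_⟩
  · ext (a|a) (b|b) <;> simp [rootVectorE, Jmat, Matrix.mul_apply,
      Matrix.single_apply, Matrix.one_apply, ite_and, eq_comm]
    grind
  · rw [sum_longRoot_mul, Ring.lie_def, CnCartan_eq_diagonal]
    ext (a|a) (b|b) <;> simp [rootVectorE, Matrix.single_apply, ite_and]
    grind

lemma rootVectorF_mem_rootSpace (i : Fin n) : rootVectorF i ∈ CnRootSpace n (-longRoot i) := by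
  refine ⟨?_, fun d => ?_⟩
  · ext (a|a) (b|b) <;> simp [rootVectorF, Jmat, Matrix.mul_apply,
      Matrix.single_apply, Matrix.one_apply, ite_and, eq_comm]
    grind
  · rw [sum_neg_longRoot_mul, Ring.lie_def, CnCartan_eq_diagonal]
    ext (a|a) (b|b) <;> simp [rootVectorF, Matrix.single_apply, ite_and]
    grind

lemma conjTranspose_rootVectorE (i : Fin n) : (rootVectorE i)ᴴ = rootVectorF i := by
  simp [rootVectorE, rootVectorF]

lemma conjTranspose_rootVectorF (i : Fin n) : (rootVectorF i)ᴴ = rootVectorE i := by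
  simp [rootVectorE, rootVectorF]

lemma rootVectors_mem_lieSpan (i : Fin n) :
    rootVectorE i ∈ LieSubalgebra.lieSpan ℂ _
        (CnRootSpace n (longRoot i) ∪ CnRootSpace n (-longRoot i)) ∧
      rootVectorF i ∈ LieSubalgebra.lieSpan ℂ _
        (CnRootSpace n (longRoot i) ∪ CnRootSpace n (-longRoot i)) :=
  ⟨LieSubalgebra.subset_lieSpan (Or.inl (rootVectorE_mem_rootSpace i)),
    LieSubalgebra.subset_lieSpan (Or.inr (rootVectorF_mem_rootSpace i))⟩

lemma rootVectorE_sub_rootVectorF_mem_CnS (i : Fin n) :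
    rootVectorE i - rootVectorF i ∈ CnS n (longRoot i) := by
  refine ⟨⟨?_, ?_⟩, sub_mem (rootVectors_mem_lieSpan i).1 (rootVectors_mem_lieSpan i).2⟩
  · rw [conjTranspose_sub, conjTranspose_rootVectorE, conjTranspose_rootVectorF, neg_sub]
  · rw [transpose_sub, Matrix.sub_mul, (rootVectorE_mem_rootSpace i).1,
      (rootVectorF_mem_rootSpace i).1, Matrix.mul_sub, neg_sub_neg, neg_sub]

lemma I_smul_rootVectorE_add_rootVectorF_mem_CnS (i : Fin n) :
    Complex.I • (rootVectorE i + rootVectorF i) ∈ CnS n (longRoot i) := by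
  refine ⟨⟨?_, ?_⟩, (LieSubalgebra.lieSpan ℂ _ _).smul_mem _
    (add_mem (rootVectors_mem_lieSpan i).1 (rootVectors_mem_lieSpan i).2)⟩
  · rw [conjTranspose_smul, conjTranspose_add, conjTranspose_rootVectorE,
      conjTranspose_rootVectorF, Complex.star_def, Complex.conj_I, add_comm, neg_smul]
  · rw [transpose_smul, transpose_add, Matrix.smul_mul, Matrix.add_mul,
      (rootVectorE_mem_rootSpace i).1, (rootVectorF_mem_rootSpace i).1, Matrix.mul_smul,
      Matrix.mul_add, ← neg_add, smul_neg]

lemma apply_inl_inl_eq_neg_of_symplectic {A : Matrix (Fin n ⊕ Fin n) (Fin n ⊕ Fin n) ℂ}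
    (hA : Aᵀ * Jmat n = -(Jmat n * A)) (i : Fin n) :
    A (Sum.inl i) (Sum.inl i) = -A (Sum.inr i) (Sum.inr i) := by
  simpa [Jmat, Matrix.mul_apply, Matrix.one_apply] using
    congrFun (congrFun hA (Sum.inl i)) (Sum.inr i)

lemma eq_zero_of_commute_rootVectors {A : Matrix (Fin n ⊕ Fin n) (Fin n ⊕ Fin n) ℂ}
    (hA : Aᵀ * Jmat n = -(Jmat n * A)) (hE : ∀ i, Commute (rootVectorE i) A)
    (hF : ∀ i, Commute (rootVectorF i) A) : A = 0 := by
  have hdiag : ∀ i, A (Sum.inl i) (Sum.inl i) = 0 := fun i => by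
    have h₁ := apply_inl_inl_eq_neg_of_symplectic hA i
    have h₂ := diag_eq_of_commute_single (hE i)
    linear_combination (h₁ + h₂) / 2
  ext x (i|i)
  · obtain rfl | hx := eq_or_ne x (Sum.inl i)
    · exact hdiag i
    · exact col_eq_zero_of_commute_single (hE i) hx
  · obtain rfl | hx := eq_or_ne x (Sum.inr i)
    · rw [← diag_eq_of_commute_single (hE i), hdiag i, Matrix.zero_apply]
    · exact col_eq_zero_of_commute_single (hF i) hx

lemma eq_zero_of_mem_CnCentralizer_longRoot {A : Matrix (Fin n ⊕ Fin n) (Fin n ⊕ Fin n) ℂ}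
    (hA : A ∈ CnCentralizer n n longRoot) : A = 0 := by
  obtain ⟨⟨-, hJ⟩, hc⟩ := hA
  have h i := commute_of_commute_sub_of_commute_smul_add Complex.I_ne_zero
    (hc i _ (rootVectorE_sub_rootVectorF_mem_CnS i))
    (hc i _ (I_smul_rootVectorE_add_rootVectorF_mem_CnS i))
  exact eq_zero_of_commute_rootVectors hJ (fun i => (h i).1.symm) (fun i => (h i).2.symm)

lemma natAbs_add_natAbs_le_two_of_mem_CnRoots {v : Fin n → ℤ} (hv : v ∈ CnRoots n)
    {k k' : Fin n} (hkk' : k ≠ k') : (v k).natAbs + (v k').natAbs ≤ 2 := by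
  rcases hv with ⟨i, j, hij, rfl | rfl | rfl⟩ | ⟨i, rfl | rfl⟩ <;>
    simp only [two_nsmul, Pi.sub_apply, Pi.add_apply, Pi.neg_apply, Pi.single_apply] <;>
    split_ifs <;> omega

lemma longRoot_apply_self (k : Fin n) : longRoot k k = 2 := by simp [longRoot]

lemma longRoot_apply_of_ne {k k' : Fin n} (h : k' ≠ k) : longRoot k k' = 0 := by
  simp [longRoot, h]

lemma longRoot_strongOrth {k k' : Fin n} (hkk' : k ≠ k') :
    CnStrongOrth n (longRoot k) (longRoot k') := by
  have not_root (v : Fin n → ℤ) (hv : 2 < (v k).natAbs + (v k').natAbs) : v ∉ CnRoots n :=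
    fun h => hv.not_ge (natAbs_add_natAbs_le_two_of_mem_CnRoots h hkk')
  have hk' := longRoot_apply_of_ne hkk'
  have hk := longRoot_apply_of_ne hkk'.symm
  refine ⟨fun h => ?_, fun h => ?_, not_root _ ?_, not_root _ ?_⟩
  · simpa [longRoot_apply_self, hk'] using congrFun h k
  · simpa [longRoot_apply_self, hk'] using congrFun h k
  · simp [longRoot_apply_self, hk, hk']
  · simp [longRoot_apply_self, hk, hk']

lemma longRoot_mem_CnRoots (k : Fin n) : longRoot k ∈ CnRoots n :=
  Or.inr ⟨k, Or.inl rfl⟩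

lemma not_forall_strongOrth_longRoot {β : Fin n → ℤ} (hβ : β ∈ CnRoots n) :
    ¬ ∀ k, CnStrongOrth n β (longRoot k) := by
  intro h
  rcases hβ with ⟨i, j, hij, rfl | rfl | rfl⟩ | ⟨i, rfl | rfl⟩
  · exact (h j).2.2.1 (Or.inl ⟨i, j, hij, Or.inr (Or.inl (by simp only [longRoot]; abel))⟩)
  · exact (h j).2.2.2 (Or.inl ⟨i, j, hij, Or.inl (by simp only [longRoot]; abel)⟩)
  · exact (h j).2.2.1 (Or.inl ⟨j, i, hij.symm, Or.inl (by simp only [longRoot]; abel)⟩)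
  · exact (h i).1 rfl
  · exact (h i).2.1 rfl

end Cn

/-- In the root system of type `C_n` (`n ≥ 2`), there exists a maximal set of
pairwise strongly orthogonal roots `θ_1, …, θ_ℓ` for which the center of the
centralizer of the corresponding `sl₂`-subalgebras in the compact real form `sp(n)`
has dimension strictly less than `ℓ`. -/
theorem stmt_10 (n : ℕ) (hn : 2 ≤ n) :
    ∃ (ℓ : ℕ) (θ : Fin ℓ → Fin n → ℤ),
      (∀ k, θ k ∈ CnRoots n) ∧
      (∀ k k', k ≠ k' → CnStrongOrth n (θ k) (θ k')) ∧
      -- maximality: no further root is strongly orthogonal to all the θ_k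
      (∀ β ∈ CnRoots n, ¬ ∀ k, CnStrongOrth n β (θ k)) ∧
      Module.finrank ℝ (Submodule.span ℝ (CnCenterCentralizer n ℓ θ)) < ℓ := by
  refine ⟨n, Cn.longRoot, Cn.longRoot_mem_CnRoots, fun _ _ => Cn.longRoot_strongOrth,
    fun _ => Cn.not_forall_strongOrth_longRoot, ?_⟩
  have hcenter : Submodule.span ℝ (CnCenterCentralizer n n Cn.longRoot) = ⊥ :=
    Submodule.span_eq_bot.2 fun _ hA => Cn.eq_zero_of_mem_CnCentralizer_longRoot hA.1
  rw [hcenter, finrank_bot]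
  omega

end
end

section
/- Let (M, I) be a complex manifold and J an almost complex structure anticommuting with I. Then J is integrable if and only if the mixed Nijenhuis-type tensor N_{IJ}(X,Y) = [IX,JY] + [JX,IY] - I[JX,Y] - J[IX,Y] - I[X,JY] - J[X,IY] vanishes identically. (Linear-algebraic core: for vector fields on M with I integrable, the Nijenhuis tensor of J equals an expression in N_{IJ}, so N_J = 0 iff N_{IJ} = 0.) -/
/-- Let `(M, I)` be a complex manifold and `J` an almost complex structure
anticommuting with `I`.  Then `J` is integrable iff the mixed Nijenhuis-type tensor
`N_{IJ}(X,Y) = [IX,JY] + [JX,IY] - I[JX,Y] - J[IX,Y] - I[X,JY] - J[X,IY]`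
vanishes identically.  (Linear-algebraic core, with the Lie algebra `V` of vector
fields on `M`: if the Nijenhuis tensor of `I` vanishes, then `N_J = 0 ↔ N_{IJ} = 0`,
where `N_A(X,Y) = [AX,AY] - [X,Y] - A[AX,Y] - A[X,AY]`.) -/
theorem stmt_16 (V : Type*) [LieRing V] [LieAlgebra ℝ V]
    (I J : V →ₗ[ℝ] V)
    (hI2 : ∀ X, I (I X) = -X) (hJ2 : ∀ X, J (J X) = -X)
    (hIJ : ∀ X, I (J X) = -J (I X))
    -- I is integrable : its Nijenhuis tensor vanishes
    (hNI : ∀ X Y : V, ⁅I X, I Y⁆ - ⁅X, Y⁆ - I ⁅I X, Y⁆ - I ⁅X, I Y⁆ = 0) :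
    -- J is integrable iff the mixed tensor N_{IJ} vanishes identically
    (∀ X Y : V, ⁅J X, J Y⁆ - ⁅X, Y⁆ - J ⁅J X, Y⁆ - J ⁅X, J Y⁆ = 0) ↔
    (∀ X Y : V, ⁅I X, J Y⁆ + ⁅J X, I Y⁆ - I ⁅J X, Y⁆ - J ⁅I X, Y⁆
        - I ⁅X, J Y⁆ - J ⁅X, I Y⁆ = 0) := by
  constructor
  · intro hNJ X Y
    have a1 := hNI X (I (J Y))
    have a2 := hNI (J X) (I Y)
    have a3 := congrArg J (hNI X (I Y))
    have a4 := congrArg J (hNI (J X) (I (J Y)))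
    have b1 := hNJ X (I (J Y))
    have b2 := hNJ (I X) (J Y)
    have b3 := congrArg I (hNJ X (J Y))
    have b4 := congrArg I (hNJ (I X) (I (J Y)))
    simp only [map_sub, map_add, map_neg, map_zero, hI2, hJ2, hIJ, neg_neg,
      lie_neg, neg_lie, sub_neg_eq_add, neg_sub] at a1 a2 a3 a4 b1 b2 b3 b4
    linear_combination (norm := module) (-(1/2 : ℝ)) • a1 + (-(1/2 : ℝ)) • a2 +
      ((1/2 : ℝ)) • a3 + (-(1/2 : ℝ)) • a4 + ((1/2 : ℝ)) • b1 + (-(1/2 : ℝ)) • b2 +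
      ((1/2 : ℝ)) • b3 + ((1/2 : ℝ)) • b4
  · intro hM X Y
    have h1 := hM X (I (J Y))
    have h2 := hM (J X) (I Y)
    have h3 := congrArg J (hM X (I Y))
    have h4 := congrArg J (hM (J X) (I (J Y)))
    simp only [map_sub, map_add, map_neg, map_zero, hI2, hJ2, hIJ, neg_neg,
      lie_neg, neg_lie, sub_neg_eq_add, neg_sub] at h1 h2 h3 h4
    linear_combination (norm := module) (-(1/2 : ℝ)) • h1 + (-(1/2 : ℝ)) • h2 +
      ((1/2 : ℝ)) • h3 + (-(1/2 : ℝ)) • h4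
end

section
/- Let g = l ⊕ m be a reductive decomposition with an ad(l)-invariant, naturally reductive inner product g_0 on m that is Hermitian with respect to two anticommuting ad(l)-invariant complex structures I, J on m. Then the integrability condition N_{IJ} = 0 on m (brackets projected to m) is equivalent to: for all X, Y, Z in m^{1,0} (the i-eigenspace of I in m^C), the cyclic sum over (X,Y,Z) of g_0(JX, [Y,Z]_{m^C}) vanishes. -/
/-- Let `g = l ⊕ m` be a reductive decomposition with an `ad(l)`-invariant,
naturally reductive inner product `g₀` on `m`, Hermitian w.r.t. two anticommuting
invariant complex structures `I, J`.  On the complexification `W = m^ℂ` (with real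
structure `σ`, projected bracket `b = [·,·]_{m^ℂ}`, and `m^{1,0}` the `i`-eigenspace
of `I`), assuming `I` is integrable, the condition `N_{IJ} = 0` is equivalent to:
for all `X, Y, Z ∈ m^{1,0}`, the cyclic sum of `g₀(JX, [Y,Z]_{m^ℂ})` vanishes. -/
theorem stmt_17 (W : Type*) [AddCommGroup W] [Module ℂ W]
    -- real structure (conjugation) on W = m^ℂ
    (σ : W →ₗ[ℝ] W)
    (hσ2 : ∀ x, σ (σ x) = x)
    (hσc : ∀ (c : ℂ) (x : W), σ (c • x) = (starRingEnd ℂ) c • σ x)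
    -- the projected bracket [·,·]_m, complexified
    (b : W →ₗ[ℂ] W →ₗ[ℂ] W)
    (hskew : ∀ x y, b x y = -b y x)
    (hbreal : ∀ x y, σ (b x y) = b (σ x) (σ y))
    -- the complexified metric
    (g : W →ₗ[ℂ] W →ₗ[ℂ] ℂ)
    (hgsymm : ∀ x y, g x y = g y x)
    (hgreal : ∀ x y, g (σ x) (σ y) = (starRingEnd ℂ) (g x y))
    (hgnondeg : ∀ x, (∀ y, g x y = 0) → x = 0)
    -- naturally reductive
    (hnr : ∀ X Y Z, g (b X Y) Z + g Y (b X Z) = 0)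
    -- the complex structures
    (I J : W →ₗ[ℂ] W)
    (hI2 : ∀ x, I (I x) = -x) (hJ2 : ∀ x, J (J x) = -x)
    (hIJ : ∀ x, I (J x) = -J (I x))
    (hIreal : ∀ x, I (σ x) = σ (I x)) (hJreal : ∀ x, J (σ x) = σ (J x))
    -- g₀ is hyper-Hermitian
    (hgI : ∀ x y, g (I x) (I y) = g x y) (hgJ : ∀ x y, g (J x) (J y) = g x y)
    -- I is integrable : [m^{1,0}, m^{1,0}]_{m^ℂ} ⊆ m^{1,0}
    (hint : ∀ x y : W, I x = Complex.I • x → I y = Complex.I • y →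
      I (b x y) = Complex.I • b x y) :
    -- N_{IJ} = 0 on m iff the cyclic sum criterion holds on m^{1,0}
    (∀ X Y : W,
        b (I X) (J Y) + b (J X) (I Y) - I (b (J X) Y) - J (b (I X) Y)
          - I (b X (J Y)) - J (b X (I Y)) = 0) ↔
    (∀ X Y Z : W, I X = Complex.I • X → I Y = Complex.I • Y → I Z = Complex.I • Z →
        g (J X) (b Y Z) + g (J Y) (b Z X) + g (J Z) (b X Y) = 0) := by
  have gI' : ∀ u v, g u (I v) = -g (I u) v := by
    intro u v
    have h := hgI (I u) v
    rw [hI2] at h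
    simp only [map_neg, LinearMap.neg_apply] at h
    linear_combination -h
  have gJ' : ∀ u v, g u (J v) = -g (J u) v := by
    intro u v
    have h := hgJ (J u) v
    rw [hJ2] at h
    simp only [map_neg, LinearMap.neg_apply] at h
    linear_combination -h
  have hsk2 : ∀ x y z, g (b x y) z = -g (b x z) y := by
    intro x y z
    linear_combination hnr x y z + hgsymm (b x z) y
  have hsk1 : ∀ x y z, g (b x y) z = -g (b y x) z := by
    intro x y z
    rw [hskew x y]
    simp
  have hcyc : ∀ x y z, g (b x y) z = g (b y z) x := by
    intro x y z
    rw [hsk1 x y z, hsk2 y x z, neg_neg]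
  have hc1 : ∀ Z X w, g Z (b X w) = g w (b Z X) := by
    intro Z X w
    rw [hgsymm Z (b X w), hcyc X w Z, hcyc w Z X, hgsymm (b Z X) w]
  have hc2 : ∀ Z w Y, g Z (b w Y) = g w (b Y Z) := by
    intro Z w Y
    rw [hgsymm Z (b w Y), hcyc w Y Z, hgsymm (b Y Z) w]
  have hJP : ∀ x, I x = Complex.I • x → I (J x) = -(Complex.I • J x) := by
    intro x hx
    rw [hIJ, hx, map_smul]
  have hJM : ∀ x, I x = -(Complex.I • x) → I (J x) = Complex.I • J x := by
    intro x hx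
    rw [hIJ, hx, map_neg, map_smul, neg_neg]
  have hσP : ∀ x, I x = Complex.I • x → I (σ x) = -(Complex.I • σ x) := by
    intro x hx
    rw [hIreal, hx, hσc]
    simp [Complex.conj_I]
  have hσM : ∀ x, I x = -(Complex.I • x) → I (σ x) = Complex.I • σ x := by
    intro x hx
    rw [hIreal, hx, map_neg, hσc]
    simp [Complex.conj_I]
  have hbMM : ∀ x y, I x = -(Complex.I • x) → I y = -(Complex.I • y) →
      I (b x y) = -(Complex.I • b x y) := by
    intro x y hx hy
    have h1 := hint (σ x) (σ y) (hσM x hx) (hσM y hy)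
    have h2 : b x y = σ (b (σ x) (σ y)) := by rw [hbreal, hσ2, hσ2]
    rw [h2, hIreal, h1, hσc]
    simp [Complex.conj_I]
  have hgMM : ∀ x y, I x = -(Complex.I • x) → I y = -(Complex.I • y) → g x y = 0 := by
    intro x y hx hy
    have h := hgI x y
    rw [hx, hy] at h
    simp only [map_neg, map_smul, LinearMap.neg_apply, LinearMap.smul_apply,
      smul_eq_mul, neg_neg, neg_mul, mul_neg] at h
    linear_combination (-1/2 : ℂ) * h + (g x y / 2) * Complex.I_mul_I
  have key : ∀ X Y Z : W, I X = Complex.I • X → I Y = Complex.I • Y → I Z = Complex.I • Z →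
      g Z (b (I X) (J Y) + b (J X) (I Y) - I (b (J X) Y) - J (b (I X) Y)
          - I (b X (J Y)) - J (b X (I Y)))
      = (2 * Complex.I) * (g (J X) (b Y Z) + g (J Y) (b Z X) + g (J Z) (b X Y)) := by
    intro X Y Z hX hY hZ
    have hD : g Z (I (b (J X) Y)) = -(Complex.I * g Z (b (J X) Y)) := by
      rw [gI' Z (b (J X) Y), hZ]
      simp
    have hE : g Z (I (b X (J Y))) = -(Complex.I * g Z (b X (J Y))) := by
      rw [gI' Z (b X (J Y)), hZ]
      simp
    have hC : g Z (J (b X Y)) = -g (J Z) (b X Y) := gJ' Z (b X Y)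
    have hA : g Z (b X (J Y)) = g (J Y) (b Z X) := hc1 Z X (J Y)
    have hB : g Z (b (J X) Y) = g (J X) (b Y Z) := hc2 Z (J X) Y
    simp only [hX, hY, map_smul, map_add, map_sub, LinearMap.smul_apply, smul_eq_mul]
    rw [hD, hE, hC, hA, hB]
    ring
  have key2 : ∀ X Y Z : W, I X = Complex.I • X → I Y = Complex.I • Y →
      I Z = -(Complex.I • Z) →
      g Z (b (I X) (J Y) + b (J X) (I Y) - I (b (J X) Y) - J (b (I X) Y)
          - I (b X (J Y)) - J (b X (I Y))) = 0 := by
    intro X Y Z hX hY hZ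
    have hD : g Z (I (b (J X) Y)) = Complex.I * g Z (b (J X) Y) := by
      rw [gI' Z (b (J X) Y), hZ]
      simp
    have hE : g Z (I (b X (J Y))) = Complex.I * g Z (b X (J Y)) := by
      rw [gI' Z (b X (J Y)), hZ]
      simp
    have hw : g Z (J (b X Y)) = 0 := hgMM Z (J (b X Y)) hZ (hJP (b X Y) (hint X Y hX hY))
    simp only [hX, hY, map_smul, map_add, map_sub, LinearMap.smul_apply, smul_eq_mul]
    rw [hD, hE, hw]
    ring
  have hdecomp : ∀ z : W, ∃ zp zm : W, z = zp + zm ∧ I zp = Complex.I • zp ∧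
      I zm = -(Complex.I • zm) := by
    intro z
    refine ⟨(2⁻¹ : ℂ) • (z - Complex.I • I z), (2⁻¹ : ℂ) • (z + Complex.I • I z), ?_, ?_, ?_⟩
    · module
    · rw [map_smul, map_sub, map_smul, hI2]
      match_scalars
      · linear_combination (1/2 : ℂ) * Complex.I_sq
      · ring
    · rw [map_smul, map_add, map_smul, hI2]
      match_scalars
      · linear_combination (1/2 : ℂ) * Complex.I_sq
      · ring
  constructor
  · intro hN X Y Z hX hY hZ
    have h := key X Y Z hX hY hZ
    rw [hN X Y, map_zero] at h
    have h3 : (2 * Complex.I : ℂ) ≠ 0 := by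
      simp [Complex.I_ne_zero]
    exact (mul_eq_zero.mp h.symm).resolve_left h3
  · intro hS
    have hNPP : ∀ X Y : W, I X = Complex.I • X → I Y = Complex.I • Y →
        b (I X) (J Y) + b (J X) (I Y) - I (b (J X) Y) - J (b (I X) Y)
          - I (b X (J Y)) - J (b X (I Y)) = 0 := by
      intro X Y hX hY
      apply hgnondeg
      intro z
      rw [hgsymm]
      obtain ⟨zp, zm, hz, hzp, hzm⟩ := hdecomp z
      rw [hz, map_add, LinearMap.add_apply]
      have h1 := key X Y zp hX hY hzp
      rw [hS X Y zp hX hY hzp, mul_zero] at h1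
      rw [h1, key2 X Y zm hX hY hzm, add_zero]
    have hNPM : ∀ X Y : W, I X = Complex.I • X → I Y = -(Complex.I • Y) →
        b (I X) (J Y) + b (J X) (I Y) - I (b (J X) Y) - J (b (I X) Y)
          - I (b X (J Y)) - J (b X (I Y)) = 0 := by
      intro X Y hX hY
      rw [hX, hY, hbMM (J X) Y (hJP X hX) hY, hint X (J Y) hX (hJM Y hY)]
      simp only [map_smul, map_neg, LinearMap.smul_apply, LinearMap.neg_apply, smul_neg]
      module
    have hNMP : ∀ X Y : W, I X = -(Complex.I • X) → I Y = Complex.I • Y →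
        b (I X) (J Y) + b (J X) (I Y) - I (b (J X) Y) - J (b (I X) Y)
          - I (b X (J Y)) - J (b X (I Y)) = 0 := by
      intro X Y hX hY
      rw [hX, hY, hint (J X) Y (hJM X hX) hY, hbMM X (J Y) hX (hJP Y hY)]
      simp only [map_smul, map_neg, LinearMap.smul_apply, LinearMap.neg_apply, smul_neg]
      module
    have hNσ : ∀ a c : W,
        b (I (σ a)) (J (σ c)) + b (J (σ a)) (I (σ c)) - I (b (J (σ a)) (σ c))
          - J (b (I (σ a)) (σ c)) - I (b (σ a) (J (σ c))) - J (b (σ a) (I (σ c)))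
        = σ (b (I a) (J c) + b (J a) (I c) - I (b (J a) c) - J (b (I a) c)
          - I (b a (J c)) - J (b a (I c))) := by
      intro a c
      simp only [hIreal, hJreal, ← hbreal, map_sub, map_add]
    have hNMM : ∀ X Y : W, I X = -(Complex.I • X) → I Y = -(Complex.I • Y) →
        b (I X) (J Y) + b (J X) (I Y) - I (b (J X) Y) - J (b (I X) Y)
          - I (b X (J Y)) - J (b X (I Y)) = 0 := by
      intro X Y hX hY
      have h := hNσ (σ X) (σ Y)
      rw [hσ2 X, hσ2 Y] at h
      rw [h, hNPP (σ X) (σ Y) (hσM X hX) (hσM Y hY), map_zero]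
    intro X Y
    obtain ⟨xp, xm, hx, hxp, hxm⟩ := hdecomp X
    obtain ⟨yp, ym, hy, hyp, hym⟩ := hdecomp Y
    rw [hx, hy]
    have e : b (I (xp + xm)) (J (yp + ym)) + b (J (xp + xm)) (I (yp + ym))
        - I (b (J (xp + xm)) (yp + ym)) - J (b (I (xp + xm)) (yp + ym))
        - I (b (xp + xm) (J (yp + ym))) - J (b (xp + xm) (I (yp + ym)))
        = (b (I xp) (J yp) + b (J xp) (I yp) - I (b (J xp) yp) - J (b (I xp) yp)
            - I (b xp (J yp)) - J (b xp (I yp)))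
        + (b (I xp) (J ym) + b (J xp) (I ym) - I (b (J xp) ym) - J (b (I xp) ym)
            - I (b xp (J ym)) - J (b xp (I ym)))
        + (b (I xm) (J yp) + b (J xm) (I yp) - I (b (J xm) yp) - J (b (I xm) yp)
            - I (b xm (J yp)) - J (b xm (I yp)))
        + (b (I xm) (J ym) + b (J xm) (I ym) - I (b (J xm) ym) - J (b (I xm) ym)
            - I (b xm (J ym)) - J (b xm (I ym))) := by
      simp only [map_add, LinearMap.add_apply]
      abel
    rw [e, hNPP xp yp hxp hyp, hNPM xp ym hxp hym, hNMP xm yp hxm hyp,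
      hNMM xm ym hxm hym]
    simp
end

section
/- With the setup of the cyclic-sum criterion (naturally reductive hyper-Hermitian data on m = t ⊕ n, θ the maximal root of R_n^+): g_0(JE_θ, E_α) = 0 for all α ∈ R_n^+, hence JE_θ ∈ t^C. (Key computation: applying the cyclic sum with X = E_θ, Y = E_α, Z = H ∈ t^C ∩ m^{1,0} yields (α+θ)(H) g_0(JE_θ, E_α) = 0.) -/
/-- Setup of the cyclic-sum criterion: naturally reductive hyper-Hermitian data on
`m = t ⊕ n`, complexified to `W = m^ℂ = t^ℂ ⊕ n^ℂ`, with `n^ℂ` spanned by root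
vectors `E_α, E_{-α}` (`α ∈ R_n⁺`, written `E α` and `F α`), `I` an integrable
invariant complex structure inducing the positive system, `J` an anticommuting
integrable complex structure, and `θ ∈ R_n⁺` maximal.  Then `g₀(J E_θ, E_α) = 0`
for all `α ∈ R_n⁺`, hence `J E_θ ∈ t^ℂ`. -/
theorem stmt_18 (W : Type*) [AddCommGroup W] [Module ℂ W]
    (ι : Type*)                       -- the positive roots R_n⁺
    (E F : ι → W)                     -- root vectors E_α and E_{-α}
    (θ : ι)
    (T : Submodule ℂ W)               -- t^ℂ
    (b : W →ₗ[ℂ] W →ₗ[ℂ] W)           -- the bracket [·,·]_{m^ℂ}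
    (hbskew : ∀ x y, b x y = -b y x)
    (g : W →ₗ[ℂ] W →ₗ[ℂ] ℂ)           -- the complexified naturally reductive metric
    (hgsymm : ∀ x y, g x y = g y x)
    (I J : W →ₗ[ℂ] W)
    (hI2 : ∀ x, I (I x) = -x) (hJ2 : ∀ x, J (J x) = -x)
    (hIJ : ∀ x, I (J x) = -J (I x))
    (hgI : ∀ x y, g (I x) (I y) = g x y) (hgJ : ∀ x y, g (J x) (J y) = g x y)
    -- the E_α lie in m^{1,0}, the i-eigenspace of I
    (hE10 : ∀ α, I (E α) = Complex.I • E α)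
    -- cyclic sum criterion (integrability of J)
    (hcyc : ∀ X Y Z : W, I X = Complex.I • X → I Y = Complex.I • Y →
      I Z = Complex.I • Z →
      g (J X) (b Y Z) + g (J Y) (b Z X) + g (J Z) (b X Y) = 0)
    -- weights of the t^ℂ-action on the root vectors
    (wt : ι → W →ₗ[ℂ] ℂ)
    (hwt : ∀ α, ∀ H ∈ T, b H (E α) = wt α H • E α)
    -- action of t_l (the Cartan part inside the isotropy l)
    (Hl : Type*) (a : Hl → Module.End ℂ W) (wl : ι → Hl → ℂ)
    (hal : ∀ h α, a h (E α) = wl α h • E α)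
    (haT : ∀ h, ∀ x ∈ T, a h x = 0)
    (haJ : ∀ h x, a h (J x) = J (a h x))              -- ad(l)-invariance of J
    (hag : ∀ h x y, g (a h x) y + g x (a h y) = 0)    -- ad(l)-invariance of g₀
    -- θ is maximal in R_n⁺: θ + α is never a root
    (hmax : ∀ α, b (E θ) (E α) = 0)
    -- α + θ ≠ 0 : it does not vanish on t^ℂ ∩ m^{1,0} or not on t_l
    (hnz : ∀ α, (∃ H ∈ T, I H = Complex.I • H ∧ wt α H + wt θ H ≠ 0) ∨
                (∃ h : Hl, wl α h + wl θ h ≠ 0))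
    -- g₀(t, n) = 0
    (hTn : ∀ H ∈ T, ∀ α, g H (E α) = 0)
    -- J E_θ lies in m^{0,1} = t^{0,1} ⊕ span{E_{-α}} ⊆ t^ℂ ⊔ span(F)
    (hJθ : J (E θ) ∈ T ⊔ Submodule.span ℂ (Set.range F))
    -- g₀ pairs span{E_{-α}} nondegenerately with the E_α
    (hpair : ∀ x ∈ Submodule.span ℂ (Set.range F), (∀ α, g x (E α) = 0) → x = 0) :
    (∀ α, g (J (E θ)) (E α) = 0) ∧ J (E θ) ∈ T := by
  have hJg : ∀ x y : W, g (J x) y = - g x (J y) := by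
    intro x y
    have h1 := hgJ x (J y)
    rw [hJ2, map_neg] at h1
    linear_combination -h1
  have key : ∀ α, g (J (E θ)) (E α) = 0 := by
    intro α
    rcases hnz α with ⟨H, hH, hIH, hne⟩ | ⟨h, hne⟩
    · have hc := hcyc (E θ) (E α) H (hE10 θ) (hE10 α) hIH
      rw [show b (E α) H = -b H (E α) from hbskew _ _, hwt α H hH, hwt θ H hH,
        hmax α] at hc
      simp only [map_neg, map_smul, map_zero, smul_eq_mul] at hc
      have h2 : g (J (E α)) (E θ) = - g (J (E θ)) (E α) := by
        rw [hJg, hgsymm]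
      rw [h2] at hc
      have : (wt α H + wt θ H) * g (J (E θ)) (E α) = 0 := by linear_combination -hc
      exact (mul_eq_zero.1 this).resolve_left hne
    · have h1 := hag h (J (E θ)) (E α)
      rw [haJ, hal, hal, map_smul, map_smul, map_smul] at h1
      simp only [LinearMap.smul_apply, smul_eq_mul] at h1
      have : (wl α h + wl θ h) * g (J (E θ)) (E α) = 0 := by linear_combination h1
      exact (mul_eq_zero.1 this).resolve_left hne
  refine ⟨key, ?_⟩
  rcases Submodule.mem_sup.1 hJθ with ⟨t, ht, f, hf, hsum⟩
  have hfz : f = 0 := by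
    refine hpair f hf fun α => ?_
    have h1 := key α
    rw [← hsum, map_add, LinearMap.add_apply, hTn t ht α] at h1
    linear_combination h1
  rw [← hsum, hfz, add_zero]
  exact ht
end
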